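/- arXiv:1308.5877 — 3 statements merged into one kernel-verified Lean document; each statement's English description precedes it below -/
import Mathlib

section
/- Let (X,d,μ) be a non-homogeneous metric measure space, α ∈ (0,1), p ∈ (1,1/α) and ρ ∈ [5,∞). Then there exists a constant C > 0 such that for all f ∈ L^p(μ) and all t > 0, μ({x ∈ X : M^{(α)}_{p,ρ} f(x) > t}) ≤ C (‖f‖_{L^p(μ)}/t)^{p/(1−αp)}. -/
open MeasureTheory Metric Set Filter ENNReal NNReal

noncomputable section

namespace NonHomog

/-- Geometric doubling with constant `N₀`: every ball can be covered by at most `N₀`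
balls of half the radius. -/
def GeomDoublingWith (X : Type*) [MetricSpace X] (N₀ : ℕ) : Prop :=
  ∀ (x : X) (r : ℝ), ∃ s : Finset X,
    s.card ≤ N₀ ∧ Metric.ball x r ⊆ ⋃ y ∈ s, Metric.ball y (r / 2)

/-- `(X, d)` is geometrically doubling. -/
def GeomDoubling (X : Type*) [MetricSpace X] : Prop :=
  ∃ N₀ : ℕ, GeomDoublingWith X N₀

/-- `μ` is upper doubling with dominating function `Λ` and constant `Cl`. -/
structure UpperDoubling {X : Type*} [MetricSpace X] [MeasurableSpace X]
    (μ : MeasureTheory.Measure X) (Λ : X → ℝ → ℝ) (Cl : ℝ) : Prop where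
  one_le : 1 ≤ Cl
  pos : ∀ (x : X) (r : ℝ), 0 < r → 0 < Λ x r
  mono : ∀ x : X, MonotoneOn (Λ x) (Set.Ioi (0 : ℝ))
  measure_ball_le : ∀ (x : X) (r : ℝ), 0 < r →
    μ (Metric.ball x r) ≤ ENNReal.ofReal (Λ x r)
  le_mul_half : ∀ (x : X) (r : ℝ), 0 < r → Λ x r ≤ Cl * Λ x (r / 2)
  compat : ∀ (x y : X) (r : ℝ), 0 < r → dist x y ≤ r → Λ x r ≤ Cl * Λ y r

/-- Conditions (1.7) and (1.8) for the kernel `K` with size constant `CK` and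
regularity exponent `δ`. -/
structure IsFracKernel {X : Type*} [MetricSpace X] (Λ : X → ℝ → ℝ) (α : ℝ)
    (K : X → X → ℝ) (CK δ : ℝ) : Prop where
  CK_pos : 0 < CK
  delta_pos : 0 < δ
  delta_le_one : δ ≤ 1
  size : ∀ x y : X, x ≠ y → |K x y| ≤ CK * Λ x (dist x y) ^ (α - 1)
  smooth : ∀ x x' y : X, 2 * dist x x' ≤ dist x y →
    |K x y - K x' y| + |K y x - K y x'| ≤
      CK * dist x x' ^ δ * dist x y ^ (-δ) * Λ x (dist x y) ^ (α - 1)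

/-- `T` is a generalized fractional integral associated with the kernel `K`. -/
structure IsGenFracIntegral {X : Type*} [MetricSpace X] [MeasurableSpace X]
    (μ : MeasureTheory.Measure X) (K : X → X → ℝ) (T : (X → ℝ) → X → ℝ) : Prop where
  map_add : ∀ f g : X → ℝ, T (f + g) = T f + T g
  map_smul : ∀ (c : ℝ) (f : X → ℝ), T (c • f) = c • T f
  eq_integral : ∀ f : X → ℝ, (∃ M : ℝ, ∀ x, |f x| ≤ M) →
    Bornology.IsBounded (Function.support f) →
    ∀ x : X, x ∉ Function.support f → T f x = ∫ y, K x y * f y ∂μ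

/-- `T` is bounded from `L^p(μ)` to `L^q(μ)` with constant `C`. -/
def BddLpLqWith {X : Type*} [MeasurableSpace X] (μ : MeasureTheory.Measure X)
    (T : (X → ℝ) → X → ℝ) (p q C : ℝ) : Prop :=
  ∀ f : X → ℝ, MeasureTheory.MemLp f (ENNReal.ofReal p) μ →
    MeasureTheory.eLpNorm (T f) (ENNReal.ofReal q) μ ≤
      ENNReal.ofReal C * MeasureTheory.eLpNorm f (ENNReal.ofReal p) μ

/-- The coefficient `K_{B,S}` for balls `B = B(xB,rB) ⊆ S = B(xS,rS)`. -/
def Kcoef {X : Type*} [MetricSpace X] [MeasurableSpace X] (μ : MeasureTheory.Measure X)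
    (Λ : X → ℝ → ℝ) (xB : X) (rB : ℝ) (xS : X) (rS : ℝ) : ℝ :=
  1 + ∫ z in Metric.ball xS (2 * rS) \ Metric.ball xB rB, (Λ xB (dist z xB))⁻¹ ∂μ

/-- The function `f` satisfies the `RBMO(μ)` conditions with constant `C`. -/
def RBMOBoundWith {X : Type*} [MetricSpace X] [MeasurableSpace X]
    (μ : MeasureTheory.Measure X) (Λ : X → ℝ → ℝ) (f : X → ℝ) (C : ℝ) : Prop :=
  ∃ fB : X → ℝ → ℝ,
    (∀ (x : X) (r : ℝ), 0 < r →
      ∫ y in Metric.ball x r, |f y - fB x r| ∂μ ≤ C * (μ (Metric.ball x (2 * r))).toReal) ∧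
    (∀ (x : X) (r : ℝ) (x' : X) (r' : ℝ), 0 < r → 0 < r' →
      Metric.ball x r ⊆ Metric.ball x' r' →
      |fB x r - fB x' r'| ≤ C * Kcoef μ Λ x r x' r')

/-- `f ∈ RBMO(μ)`. -/
def MemRBMO {X : Type*} [MetricSpace X] [MeasurableSpace X]
    (μ : MeasureTheory.Measure X) (Λ : X → ℝ → ℝ) (f : X → ℝ) : Prop :=
  ∃ C : ℝ, 0 ≤ C ∧ RBMOBoundWith μ Λ f C

/-- The `RBMO(μ)` norm of `f`. -/
def RBMONorm {X : Type*} [MetricSpace X] [MeasurableSpace X]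
    (μ : MeasureTheory.Measure X) (Λ : X → ℝ → ℝ) (f : X → ℝ) : ℝ :=
  sInf {C : ℝ | 0 ≤ C ∧ RBMOBoundWith μ Λ f C}

/-- `b` is an `(∞,1)_λ`-atomic block with `|b|_{H¹} = c`. -/
def IsAtomicBlock {X : Type*} [MetricSpace X] [MeasurableSpace X]
    (μ : MeasureTheory.Measure X) (Λ : X → ℝ → ℝ) (b : X → ℝ) (c : ℝ) : Prop :=
  ∃ (xR : X) (rR : ℝ) (l₁ l₂ : ℝ) (a₁ a₂ : X → ℝ) (x₁ x₂ : X) (r₁ r₂ : ℝ),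
    0 < rR ∧ 0 < r₁ ∧ 0 < r₂ ∧
    Function.support b ⊆ Metric.ball xR rR ∧
    MeasureTheory.Integrable b μ ∧ (∫ x, b x ∂μ) = 0 ∧
    (∀ x, b x = l₁ * a₁ x + l₂ * a₂ x) ∧
    Function.support a₁ ⊆ Metric.ball x₁ r₁ ∧
    Function.support a₂ ⊆ Metric.ball x₂ r₂ ∧
    Metric.ball x₁ r₁ ⊆ Metric.ball xR rR ∧
    Metric.ball x₂ r₂ ⊆ Metric.ball xR rR ∧
    (∀ x, |a₁ x| ≤ ((μ (Metric.ball x₁ (4 * r₁))).toReal * Kcoef μ Λ x₁ r₁ xR rR)⁻¹) ∧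
    (∀ x, |a₂ x| ≤ ((μ (Metric.ball x₂ (4 * r₂))).toReal * Kcoef μ Λ x₂ r₂ xR rR)⁻¹) ∧
    c = |l₁| + |l₂|

/-- The set of sums `Σᵢ |bᵢ|_{H¹}` over atomic block decompositions of `f`. -/
def H1NormSet {X : Type*} [MetricSpace X] [MeasurableSpace X]
    (μ : MeasureTheory.Measure X) (Λ : X → ℝ → ℝ) (f : X → ℝ) : Set ℝ :=
  {c : ℝ | ∃ (b : ℕ → X → ℝ) (l : ℕ → ℝ),
    (∀ i, IsAtomicBlock μ Λ (b i) (l i)) ∧ Summable l ∧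
    Filter.Tendsto
      (fun N => MeasureTheory.eLpNorm (f - ∑ i ∈ Finset.range N, b i) 1 μ)
      Filter.atTop (nhds 0) ∧
    c = ∑' i, l i}

/-- `f ∈ H¹(μ)`. -/
def MemH1 {X : Type*} [MetricSpace X] [MeasurableSpace X]
    (μ : MeasureTheory.Measure X) (Λ : X → ℝ → ℝ) (f : X → ℝ) : Prop :=
  MeasureTheory.Integrable f μ ∧ (H1NormSet μ Λ f).Nonempty

/-- The `H¹(μ)` norm of `f`. -/
def H1Norm {X : Type*} [MetricSpace X] [MeasurableSpace X]
    (μ : MeasureTheory.Measure X) (Λ : X → ℝ → ℝ) (f : X → ℝ) : ℝ :=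
  sInf (H1NormSet μ Λ f)

/-- The fractional maximal operator `M^{(α)}_{p,ρ}`. -/
def fracMax {X : Type*} [MetricSpace X] [MeasurableSpace X]
    (μ : MeasureTheory.Measure X) (p ρ α : ℝ) (f : X → ℝ) (x : X) : ℝ≥0∞ :=
  ⨆ (c : X) (r : ℝ) (_ : 0 < r) (_ : x ∈ Metric.ball c r),
    ENNReal.ofReal (((μ (Metric.ball c (ρ * r))).toReal ^ (α * p - 1) *
      ∫ y in Metric.ball c r, |f y| ^ p ∂μ) ^ (1 / p))

/-- The constant `β₆`. -/
def beta6 (N₀ : ℕ) (Cl : ℝ) : ℝ :=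
  6 ^ (3 * max (Real.logb 2 N₀) (Real.logb 2 Cl)) +
    30 ^ (Real.logb 2 N₀) + 30 ^ (Real.logb 2 Cl)

/-- The ball `B(x,r)` is `(6,β)`-doubling. -/
def IsDoublingBall {X : Type*} [MetricSpace X] [MeasurableSpace X]
    (μ : MeasureTheory.Measure X) (β : ℝ) (x : X) (r : ℝ) : Prop :=
  μ (Metric.ball x (6 * r)) ≤ ENNReal.ofReal β * μ (Metric.ball x r)

/-- Index of the smallest doubling ball of the form `6^j B`. -/
def doublingIndex {X : Type*} [MetricSpace X] [MeasurableSpace X]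
    (μ : MeasureTheory.Measure X) (β : ℝ) (x : X) (r : ℝ) : ℕ :=
  sInf {j : ℕ | IsDoublingBall μ β x (6 ^ j * r)}

/-- Mean value of `f` over the ball `B(x,r)`. -/
def ballAvg {X : Type*} [MetricSpace X] [MeasurableSpace X]
    (μ : MeasureTheory.Measure X) (x : X) (r : ℝ) (f : X → ℝ) : ℝ :=
  (μ (Metric.ball x r)).toReal⁻¹ * ∫ y in Metric.ball x r, f y ∂μ

/-- Mean value of `f` over `B̃`, the smallest doubling ball of the form `6^j B`. -/
def tildeAvg {X : Type*} [MetricSpace X] [MeasurableSpace X]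
    (μ : MeasureTheory.Measure X) (β : ℝ) (x : X) (r : ℝ) (f : X → ℝ) : ℝ :=
  ballAvg μ x (6 ^ doublingIndex μ β x r * r) f

/-- `N_{B,S}`: smallest integer `N ≥ 1` with `6^N r_B ≥ r_S`. -/
def NBS (rB rS : ℝ) : ℕ :=
  sInf {N : ℕ | 1 ≤ N ∧ rS ≤ 6 ^ N * rB}

/-- The fractional coefficient `K̃^{(α)}_{B,S}` where `B = B(x,rB)` and `r_S = rS`. -/
def Ktilde {X : Type*} [MetricSpace X] [MeasurableSpace X]
    (μ : MeasureTheory.Measure X) (Λ : X → ℝ → ℝ) (α : ℝ) (x : X) (rB rS : ℝ) : ℝ :=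
  1 + ∑ k ∈ Finset.Icc 1 (NBS rB rS),
    ((μ (Metric.ball x (6 ^ k * rB))).toReal / Λ x (6 ^ k * rB)) ^ (1 - α)

/-- The sharp maximal operator `M̃^{#,α}`. -/
def sharpMax {X : Type*} [MetricSpace X] [MeasurableSpace X]
    (μ : MeasureTheory.Measure X) (Λ : X → ℝ → ℝ) (β α : ℝ) (f : X → ℝ) (x : X) : ℝ≥0∞ :=
  (⨆ (c : X) (r : ℝ) (_ : 0 < r) (_ : x ∈ Metric.ball c r),
    ENNReal.ofReal ((μ (Metric.ball c (6 * r))).toReal⁻¹ *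
      ∫ y in Metric.ball c r, |f y - tildeAvg μ β c r f| ∂μ)) +
  ⨆ (cQ : X) (rQ : ℝ) (cR : X) (rR : ℝ) (_ : 0 < rQ) (_ : 0 < rR)
    (_ : x ∈ Metric.ball cQ rQ) (_ : Metric.ball cQ rQ ⊆ Metric.ball cR rR)
    (_ : IsDoublingBall μ β cQ rQ) (_ : IsDoublingBall μ β cR rR),
    ENNReal.ofReal (|ballAvg μ cQ rQ f - ballAvg μ cR rR f| / Ktilde μ Λ α cQ rQ rR)

/-- The commutator `[b, T]`. -/
def commOp {X : Type*} (b : X → ℝ) (T : (X → ℝ) → X → ℝ) : (X → ℝ) → X → ℝ :=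
  fun f x => b x * T f x - T (fun y => b y * f y) x

/-- The multilinear commutator `[b_k, ⋯, [b₁, T] ⋯ ]`. -/
def multiComm {X : Type*} : (k : ℕ) → (Fin k → X → ℝ) → ((X → ℝ) → X → ℝ) →
    (X → ℝ) → X → ℝ
  | 0, _, T => T
  | (k + 1), b, T => commOp (b (Fin.last k)) (multiComm k (fun i => b i.castSucc) T)

/-- `Φ` is a convex Orlicz function. -/
structure IsOrliczFn (Φ : ℝ → ℝ) : Prop where
  convex : ConvexOn ℝ (Set.Ici 0) Φ
  mono : MonotoneOn Φ (Set.Ici (0 : ℝ))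
  map_zero : Φ 0 = 0
  pos : ∀ t : ℝ, 0 < t → 0 < Φ t
  tendsto_atTop : Filter.Tendsto Φ Filter.atTop Filter.atTop

/-- The generalized inverse `Φ⁻¹(t) = inf {s > 0 : Φ(s) > t}`. -/
def orliczInv (Φ : ℝ → ℝ) (t : ℝ) : ℝ :=
  sInf {s : ℝ | 0 < s ∧ t < Φ s}

/-- The Luxemburg norm on the Orlicz space `L^Φ(μ)`. -/
def luxNorm {X : Type*} [MeasurableSpace X] (μ : MeasureTheory.Measure X)
    (Φ : ℝ → ℝ) (f : X → ℝ) : ℝ :=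
  sInf {t : ℝ | 0 < t ∧ ∫ x, Φ (|f x| / t) ∂μ ≤ 1}

/-- `f ∈ L^Φ(μ)`. -/
def MemOrlicz {X : Type*} [MeasurableSpace X] (μ : MeasureTheory.Measure X)
    (Φ : ℝ → ℝ) (f : X → ℝ) : Prop :=
  MeasureTheory.AEStronglyMeasurable f μ ∧
    MeasureTheory.Integrable (fun x => Φ |f x|) μ

/-- `f` satisfies the `Osc_{exp L^r}(μ)` conditions with constant `C`
(doubling parameter `β`). -/
def OscBoundWith {X : Type*} [MetricSpace X] [MeasurableSpace X]
    (μ : MeasureTheory.Measure X) (Λ : X → ℝ → ℝ) (β r : ℝ) (f : X → ℝ) (C : ℝ) : Prop :=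
  (∀ (x : X) (s : ℝ), 0 < s → ∀ t : ℝ, C < t →
    (μ (Metric.ball x (2 * s))).toReal⁻¹ *
      ∫ y in Metric.ball x s, Real.exp ((|f y - tildeAvg μ β x s f| / t) ^ r) ∂μ ≤ 2) ∧
  (∀ (cQ : X) (rQ : ℝ) (cR : X) (rR : ℝ), 0 < rQ → 0 < rR →
    Metric.ball cQ rQ ⊆ Metric.ball cR rR →
    IsDoublingBall μ β cQ rQ → IsDoublingBall μ β cR rR →
    |ballAvg μ cQ rQ f - ballAvg μ cR rR f| ≤ C * Kcoef μ Λ cQ rQ cR rR)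

/-- `f ∈ Osc_{exp L^r}(μ)`. -/
def MemOsc {X : Type*} [MetricSpace X] [MeasurableSpace X]
    (μ : MeasureTheory.Measure X) (Λ : X → ℝ → ℝ) (β r : ℝ) (f : X → ℝ) : Prop :=
  ∃ C : ℝ, 0 ≤ C ∧ OscBoundWith μ Λ β r f C

/-- The `Osc_{exp L^r}(μ)` norm of `f`. -/
def OscNorm {X : Type*} [MetricSpace X] [MeasurableSpace X]
    (μ : MeasureTheory.Measure X) (Λ : X → ℝ → ℝ) (β r : ℝ) (f : X → ℝ) : ℝ :=
  sInf {C : ℝ | 0 ≤ C ∧ OscBoundWith μ Λ β r f C}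

/-- `Φ_s(u) := u log^s (2 + u)`. -/
def PhiLog (s u : ℝ) : ℝ :=
  u * Real.log (2 + u) ^ s

/-- The dominating function `Λ` satisfies the `ε`-weak reverse doubling condition. -/
def WeakReverseDoubling (X : Type*) [MetricSpace X] (Λ : X → ℝ → ℝ) (ε : ℝ) : Prop :=
  ∃ C : ℝ → ℝ, (∀ a : ℝ, 1 ≤ C a) ∧
    (∀ r : ℝ, 0 < r → ENNReal.ofReal r < 2 * EMetric.diam (Set.univ : Set X) →
      ∀ a : ℝ, 1 < a →
        ENNReal.ofReal a < 2 * EMetric.diam (Set.univ : Set X) / ENNReal.ofReal r →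
        ∀ x : X, C a * Λ x r ≤ Λ x (a * r)) ∧
    (∀ a : ℝ, 1 < a → Summable fun k : ℕ => C (a ^ (k + 1)) ^ (-ε))

end NonHomog

/-! If the fractional average of `f` over a ball `Q` exceeds `t`, then
`μ(ρQ)^(1-αp) ≤ t^(-p) ∫_Q |f|^p`. A Vitali covering of the level set by disjoint balls `Q_j` whose
dilates `ρQ_j` cover it, together with the subadditivity of `u ↦ u^(1-αp)` (as `1 - αp ≤ 1`),
gives `μ(E)^(1-αp) ≤ ∑ μ(ρQ_j)^(1-αp) ≤ t^(-p) ‖f‖_p^p`. -/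

theorem ENNReal.rpow_tsum_le_tsum_rpow {ι : Type*} (a : ι → ℝ≥0∞) {s : ℝ} (hs0 : 0 < s)
    (hs1 : s ≤ 1) : (∑' i, a i) ^ s ≤ ∑' i, a i ^ s := by
  rw [ENNReal.tsum_eq_iSup_sum]
  refine ((ENNReal.orderIsoRpow s hs0).map_iSup _).trans_le (iSup_le fun F => ?_)
  calc (∑ i ∈ F, a i) ^ s ≤ ∑ i ∈ F, a i ^ s :=
        Finset.le_sum_of_subadditive (· ^ s) (ENNReal.zero_rpow_of_pos hs0).le
          (fun x y => ENNReal.rpow_add_le_add_rpow x y hs0.le hs1) F a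
    _ ≤ ∑' i, a i ^ s := ENNReal.sum_le_tsum F

theorem Real.pos_and_rpow_one_sub_le_of_lt_rpow {m g t p a : ℝ} (hm : 0 ≤ m) (hg : 0 ≤ g)
    (ht : 0 < t) (hp : 0 < p) (ha : a < 1) (h : t < (m ^ (a - 1) * g) ^ (1 / p)) :
    0 < m ∧ 0 < g ∧ m ^ (1 - a) ≤ t ^ (-p) * g := by
  have hx : 0 ≤ m ^ (a - 1) * g := mul_nonneg (Real.rpow_nonneg hm _) hg
  have htp : t ^ p < m ^ (a - 1) * g := by
    simpa [← Real.rpow_mul hx, inv_mul_cancel₀ hp.ne'] using Real.rpow_lt_rpow ht.le h hp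
  have htp0 : 0 < t ^ p := Real.rpow_pos_of_pos ht p
  have hm0 : 0 < m := by
    refine hm.lt_of_ne fun hm0 => ?_
    rw [← hm0, Real.zero_rpow (by linarith), zero_mul] at htp
    exact htp0.not_gt htp
  have hg0 : 0 < g := pos_of_mul_pos_right (htp0.trans htp) (Real.rpow_nonneg hm _)
  refine ⟨hm0, hg0, ?_⟩
  have hcancel : m ^ (a - 1) * m ^ (1 - a) = 1 := by
    rw [← Real.rpow_add hm0]; norm_num
  rw [Real.rpow_neg ht.le, ← div_eq_inv_mul, le_div_iff₀ htp0]
  nlinarith [Real.rpow_pos_of_pos hm0 (1 - a)]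

theorem ENNReal.ofReal_rpow_neg_mul_rpow_rpow_inv {e : ℝ≥0∞} (he : e ≠ ∞) {t p s : ℝ}
    (ht : 0 < t) (hp : 0 ≤ p) (hs : 0 ≤ s) :
    (ENNReal.ofReal (t ^ (-p)) * e ^ p) ^ s⁻¹ = ENNReal.ofReal ((e.toReal / t) ^ (p / s)) := by
  have hpow : e ^ p = ENNReal.ofReal (e.toReal ^ p) := by
    rw [← ENNReal.ofReal_rpow_of_nonneg ENNReal.toReal_nonneg hp, ENNReal.ofReal_toReal he]
  have hreal : t ^ (-p) * e.toReal ^ p = (e.toReal / t) ^ p := by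
    rw [Real.div_rpow ENNReal.toReal_nonneg ht.le, Real.rpow_neg ht.le, div_eq_inv_mul]
  rw [hpow, ← ENNReal.ofReal_mul (by positivity), hreal,
    ENNReal.ofReal_rpow_of_nonneg (by positivity) (inv_nonneg.2 hs),
    ← Real.rpow_mul (by positivity), div_eq_mul_inv p s]

theorem MeasureTheory.lintegral_rpow_enorm_eq_eLpNorm_ofReal_rpow {X : Type*}
    [MeasurableSpace X] {μ : Measure X} {f : X → ℝ} {p : ℝ} (hp : 0 < p) :
    ∫⁻ y, ‖f y‖ₑ ^ p ∂μ = eLpNorm f (ENNReal.ofReal p) μ ^ p := by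
  rw [eLpNorm_eq_eLpNorm' (by simpa using hp) ENNReal.ofReal_ne_top,
    ENNReal.toReal_ofReal hp.le, lintegral_rpow_enorm_eq_rpow_eLpNorm' hp]

section Covering

open Function

variable {X : Type*} [MetricSpace X] [MeasurableSpace X] {μ ν : Measure X} {s ρ : ℝ}
  {F : Set (X × ℝ)}

theorem measure_le_of_forall_measure_inter_ball_le {A : Set X} (x₀ : X) {c : ℝ≥0∞}
    (h : ∀ n : ℕ, μ (A ∩ ball x₀ n) ≤ c) : μ A ≤ c := by
  have hmono : Monotone fun n : ℕ => A ∩ ball x₀ n := fun m n hmn =>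
    inter_subset_inter_right _ (ball_subset_ball (by exact_mod_cast hmn))
  rw [← inter_univ A, ← iUnion_ball_nat x₀, inter_iUnion, hmono.measure_iUnion]
  exact iSup_le h

theorem rpow_measure_biUnion_ball_le_of_bddAbove [OpensMeasurableSpace X] (hs0 : 0 < s)
    (hs1 : s ≤ 1) (hρ : 3 < ρ) {R : ℝ} (hR : ∀ q ∈ F, q.2 ≤ R)
    (hF : ∀ q ∈ F, 0 < ν (ball q.1 q.2) ∧ μ (ball q.1 (ρ * q.2)) ^ s ≤ ν (ball q.1 q.2)) :
    μ (⋃ q ∈ F, ball q.1 q.2) ^ s ≤ ν univ := by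
  rcases eq_or_ne (ν univ) ∞ with hν | hν
  · exact hν ▸ le_top
  -- any enlargement factor in `(3, ρ)` puts the closed enlarged ball inside the open `ρ`-ball
  obtain ⟨u, huF, hdisj, hcover⟩ :=
    Vitali.exists_disjoint_subfamily_covering_enlargement_closedBall F Prod.fst Prod.snd R hR
      ((3 + ρ) / 2) (by linarith)
  have hudisj : Pairwise (Disjoint on fun q : u => ball q.1.1 q.1.2) := fun q q' hqq' =>
    (hdisj q.2 q'.2 (Subtype.coe_injective.ne hqq')).mono ball_subset_closedBall
      ball_subset_closedBall
  have : Countable u := by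
    have hpos := ν.countable_meas_pos_of_disjoint_of_meas_iUnion_ne_top
      (fun _ => measurableSet_ball) hudisj (measure_ne_top_of_subset (subset_univ _) hν)
    rw [show {q : u | 0 < ν (ball q.1.1 q.1.2)} = univ from
      eq_univ_of_forall fun q => (hF q (huF q.2)).1] at hpos
    exact countable_univ_iff.1 hpos
  have hsub : (⋃ q ∈ F, ball q.1 q.2) ⊆ ⋃ q : u, ball q.1.1 (ρ * q.1.2) := by
    refine iUnion₂_subset fun q hq x hx => ?_
    obtain ⟨b, hbu, hb⟩ := hcover q hq
    have hb0 : 0 < b.2 := nonempty_ball.1 (nonempty_of_measure_ne_zero (hF b (huF hbu)).1.ne')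
    have hxb := mem_closedBall.1 (hb (ball_subset_closedBall hx))
    exact mem_iUnion.2 ⟨⟨b, hbu⟩, mem_ball.2 (by nlinarith)⟩
  calc μ (⋃ q ∈ F, ball q.1 q.2) ^ s ≤ (∑' q : u, μ (ball q.1.1 (ρ * q.1.2))) ^ s :=
        ENNReal.rpow_le_rpow ((measure_mono hsub).trans (measure_iUnion_le _)) hs0.le
    _ ≤ ∑' q : u, μ (ball q.1.1 (ρ * q.1.2)) ^ s := ENNReal.rpow_tsum_le_tsum_rpow _ hs0 hs1
    _ ≤ ∑' q : u, ν (ball q.1.1 q.1.2) := ENNReal.tsum_le_tsum fun q => (hF q (huF q.2)).2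
    _ = ν (⋃ q : u, ball q.1.1 q.1.2) :=
        (measure_iUnion hudisj fun _ => measurableSet_ball).symm
    _ ≤ ν univ := measure_mono (subset_univ _)

theorem rpow_measure_biUnion_ball_le [OpensMeasurableSpace X] (hs0 : 0 < s) (hs1 : s ≤ 1)
    (hρ : 3 < ρ)
    (hF : ∀ q ∈ F, 0 < ν (ball q.1 q.2) ∧ μ (ball q.1 (ρ * q.2)) ^ s ≤ ν (ball q.1 q.2)) :
    μ (⋃ q ∈ F, ball q.1 q.2) ^ s ≤ ν univ := by
  rcases isEmpty_or_nonempty X with _ | ⟨⟨x₀⟩⟩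
  · simp [eq_empty_of_isEmpty, ENNReal.zero_rpow_of_pos hs0]
  rw [← ENNReal.le_rpow_inv_iff hs0]
  refine measure_le_of_forall_measure_inter_ball_le x₀ fun n =>
    (ENNReal.le_rpow_inv_iff hs0).2 ?_
  -- a ball of radius `> n` meeting `ball x₀ n` has a `ρ`-dilate containing `ball x₀ n`;
  -- if there is none, only balls of radius `≤ n` matter and Vitali applies
  by_cases hbig : ∃ q ∈ F, (n : ℝ) < q.2 ∧ (ball q.1 q.2 ∩ ball x₀ n).Nonempty
  · obtain ⟨q, hqF, hnq, z, hzq, hzn⟩ := hbig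
    have hsub : (⋃ q ∈ F, ball q.1 q.2) ∩ ball x₀ n ⊆ ball q.1 (ρ * q.2) :=
      fun y ⟨_, hyn⟩ => by
        have := dist_triangle4 y x₀ z q.1
        rw [mem_ball] at hyn hzq hzn ⊢
        rw [dist_comm x₀] at this
        nlinarith [(Nat.cast_nonneg n : (0 : ℝ) ≤ n)]
    calc μ ((⋃ q ∈ F, ball q.1 q.2) ∩ ball x₀ n) ^ s ≤ μ (ball q.1 (ρ * q.2)) ^ s :=
          ENNReal.rpow_le_rpow (measure_mono hsub) hs0.le
      _ ≤ ν univ := (hF q hqF).2.trans (measure_mono (subset_univ _))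
  · push Not at hbig
    refine le_trans (ENNReal.rpow_le_rpow (measure_mono ?_) hs0.le)
      (rpow_measure_biUnion_ball_le_of_bddAbove hs0 hs1 hρ (F := {q ∈ F | q.2 ≤ n})
        (fun q hq => hq.2) fun q hq => hF q hq.1)
    rintro y ⟨hy, hyn⟩
    obtain ⟨q, hqF, hyq⟩ := mem_iUnion₂.1 hy
    refine mem_iUnion₂.2 ⟨q, ⟨hqF, not_lt.1 fun hnq => ?_⟩, hyq⟩
    exact (hbig q hqF hnq).subset ⟨hyq, hyn⟩

end Covering

namespace NonHomog

section FracAvg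

variable {X : Type*} [MetricSpace X] [MeasurableSpace X]

def fracAvg (μ : Measure X) (p ρ α : ℝ) (f : X → ℝ) (c : X) (r : ℝ) : ℝ≥0∞ :=
  ENNReal.ofReal (((μ (ball c (ρ * r))).toReal ^ (α * p - 1) *
    ∫ y in ball c r, |f y| ^ p ∂μ) ^ (1 / p))

variable {μ : Measure X} {p ρ α : ℝ} {f : X → ℝ}

theorem lt_fracMax_iff {x : X} {a : ℝ≥0∞} :
    a < fracMax μ p ρ α f x ↔ ∃ c r, 0 < r ∧ x ∈ ball c r ∧ a < fracAvg μ p ρ α f c r := by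
  simp only [fracMax, fracAvg, lt_iSup_iff, exists_prop]

theorem rpow_measure_ball_le_of_lt_fracAvg {t : ℝ} {c : X} {r : ℝ} (hp : 0 < p)
    (hαp : α * p < 1) (ht : 0 < t) (h : ENNReal.ofReal t < fracAvg μ p ρ α f c r) :
    0 < ENNReal.ofReal (t ^ (-p)) * ∫⁻ y in ball c r, ‖f y‖ₑ ^ p ∂μ ∧
      μ (ball c (ρ * r)) ^ (1 - α * p) ≤
        ENNReal.ofReal (t ^ (-p)) * ∫⁻ y in ball c r, ‖f y‖ₑ ^ p ∂μ := by
  have hg : 0 ≤ ∫ y in ball c r, |f y| ^ p ∂μ := integral_nonneg fun y => by positivity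
  obtain ⟨hm, hg0, hle⟩ := Real.pos_and_rpow_one_sub_le_of_lt_rpow ENNReal.toReal_nonneg hg ht
    hp hαp ((ENNReal.ofReal_lt_ofReal_iff_of_nonneg ht.le).1 h)
  have hint : ENNReal.ofReal (∫ y in ball c r, |f y| ^ p ∂μ) =
      ∫⁻ y in ball c r, ‖f y‖ₑ ^ p ∂μ := by
    rw [ofReal_integral_eq_lintegral_ofReal (Integrable.of_integral_ne_zero hg0.ne')
      (ae_of_all _ fun y => by positivity)]
    simp only [Real.enorm_eq_ofReal_abs, ENNReal.ofReal_rpow_of_nonneg (abs_nonneg _) hp.le]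
  rw [← hint, ← ENNReal.ofReal_mul (by positivity)]
  refine ⟨ENNReal.ofReal_pos.2 (by positivity), ?_⟩
  rw [← ENNReal.ofReal_toReal (ENNReal.toReal_pos_iff.1 hm).2.ne,
    ENNReal.ofReal_rpow_of_nonneg ENNReal.toReal_nonneg (by linarith)]
  exact ENNReal.ofReal_le_ofReal hle

end FracAvg

end NonHomog

theorem statement6_general {X : Type*} [MetricSpace X] [MeasurableSpace X] [BorelSpace X]
    (μ : MeasureTheory.Measure X)
    (α : ℝ) (hα : α ∈ Set.Ioo (0 : ℝ) 1)
    (p ρ : ℝ) (hp : 1 < p) (hp' : p < 1 / α) (hρ : 5 ≤ ρ) :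
    ∃ C : ℝ, 0 < C ∧ ∀ f : X → ℝ, MeasureTheory.MemLp f (ENNReal.ofReal p) μ →
      ∀ t : ℝ, 0 < t →
        μ {x : X | ENNReal.ofReal t < NonHomog.fracMax μ p ρ α f x} ≤
          ENNReal.ofReal
            (C * ((MeasureTheory.eLpNorm f (ENNReal.ofReal p) μ).toReal / t) ^
              (p / (1 - α * p))) := by
  have hp0 : 0 < p := one_pos.trans hp
  have hαp : α * p < 1 := by rwa [lt_one_div hp0 hα.1, lt_div_iff₀ hp0] at hp'
  have hs0 : 0 < 1 - α * p := by linarith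
  have hs1 : 1 - α * p ≤ 1 := sub_le_self _ (mul_pos hα.1 hp0).le
  refine ⟨1, one_pos, fun f hf t ht => ?_⟩
  set ν := ENNReal.ofReal (t ^ (-p)) • μ.withDensity fun y => ‖f y‖ₑ ^ p
  have hν : ∀ A, MeasurableSet A →
      ν A = ENNReal.ofReal (t ^ (-p)) * ∫⁻ y in A, ‖f y‖ₑ ^ p ∂μ :=
    fun A hA => by rw [Measure.smul_apply, withDensity_apply _ hA, smul_eq_mul]
  have hsub : {x | ENNReal.ofReal t < NonHomog.fracMax μ p ρ α f x} ⊆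
      ⋃ q ∈ {q : X × ℝ | ENNReal.ofReal t < NonHomog.fracAvg μ p ρ α f q.1 q.2}, ball q.1 q.2 :=
    fun x hx => by
      obtain ⟨c, r, -, hxc, hlt⟩ := NonHomog.lt_fracMax_iff.1 hx
      exact mem_iUnion₂.2 ⟨(c, r), hlt, hxc⟩
  have hweak := (ENNReal.rpow_le_rpow (measure_mono hsub) hs0.le).trans
    (rpow_measure_biUnion_ball_le (μ := μ) (ν := ν) hs0 hs1 (by linarith : (3 : ℝ) < ρ)
      fun q hq => by
        simpa only [hν _ measurableSet_ball] using
          NonHomog.rpow_measure_ball_le_of_lt_fracAvg hp0 hαp ht hq)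
  rw [← ENNReal.le_rpow_inv_iff hs0, hν _ MeasurableSet.univ, Measure.restrict_univ,
    lintegral_rpow_enorm_eq_eLpNorm_ofReal_rpow hp0,
    ENNReal.ofReal_rpow_neg_mul_rpow_rpow_inv hf.2.ne ht hp0.le hs0.le] at hweak
  rwa [one_mul]

/-- Estimate (3.1): the weak type estimate for the fractional maximal operator
`M^{(α)}_{p,ρ}`. -/
theorem statement6 {X : Type*} [MetricSpace X] [MeasurableSpace X] [BorelSpace X]
    (μ : MeasureTheory.Measure X) (Λ : X → ℝ → ℝ) (Cl : ℝ)
    (hGD : NonHomog.GeomDoubling X) (hUD : NonHomog.UpperDoubling μ Λ Cl)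
    (α : ℝ) (hα : α ∈ Set.Ioo (0 : ℝ) 1)
    (p ρ : ℝ) (hp : 1 < p) (hp' : p < 1 / α) (hρ : 5 ≤ ρ) :
    ∃ C : ℝ, 0 < C ∧ ∀ f : X → ℝ, MeasureTheory.MemLp f (ENNReal.ofReal p) μ →
      ∀ t : ℝ, 0 < t →
        μ {x : X | ENNReal.ofReal t < NonHomog.fracMax μ p ρ α f x} ≤
          ENNReal.ofReal
            (C * ((MeasureTheory.eLpNorm f (ENNReal.ofReal p) μ).toReal / t) ^
              (p / (1 - α * p))) :=
  statement6_general μ α hα p ρ hp hp' hρ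
end
end

section
/- Let (X,d,μ) be a non-homogeneous metric measure space and α ∈ [0,1). There exists a constant P_α > 0, depending only on C_λ and α, with the following property: if m ∈ ℕ and B₁ ⊂ B₂ ⊂ ⋯ ⊂ B_m are concentric balls with K̃^{(α)}_{B_i,B_{i+1}} > P_α for every i ∈ {1,…,m−1}, then there is a constant C > 0, depending only on C_λ and α, such that Σ_{i=1}^{m−1} K̃^{(α)}_{B_i,B_{i+1}} ≤ C K̃^{(α)}_{B₁,B_m}. -/
open MeasureTheory Metric Set Filter ENNReal NNReal

noncomputable section

namespace NonHomog

section NBS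

variable {rB rS : ℝ}

lemma NBS_spec (hB : 0 < rB) : 1 ≤ NBS rB rS ∧ rS ≤ 6 ^ NBS rB rS * rB := by
  apply Nat.sInf_mem (s := {N : ℕ | 1 ≤ N ∧ rS ≤ 6 ^ N * rB})
  obtain ⟨n, hn⟩ := pow_unbounded_of_one_lt (rS / rB) (by norm_num : (1 : ℝ) < 6)
  refine ⟨n + 1, Nat.le_add_left 1 n, ?_⟩
  calc rS ≤ 6 ^ n * rB := ((div_lt_iff₀ hB).mp hn).le
    _ ≤ 6 ^ (n + 1) * rB := by gcongr <;> norm_num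

lemma NBS_le {k : ℕ} (hk : 1 ≤ k) (h : rS ≤ 6 ^ k * rB) : NBS rB rS ≤ k :=
  Nat.sInf_le ⟨hk, h⟩

lemma NBS_le_NBS (hB : 0 < rB) {ρ : ℝ} (h : ρ ≤ rS) : NBS rB ρ ≤ NBS rB rS :=
  NBS_le (NBS_spec hB).1 (h.trans (NBS_spec hB).2)

lemma pow_mul_lt_of_lt_NBS {k : ℕ} (hk : 1 ≤ k) (hkN : k < NBS rB rS) : 6 ^ k * rB < rS :=
  not_le.mp fun h => hkN.not_ge (NBS_le hk h)

lemma pow_pred_NBS_mul_lt (h : rB < rS) : 6 ^ (NBS rB rS - 1) * rB < rS := by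
  rcases Nat.eq_zero_or_pos (NBS rB rS - 1) with hN | hN
  · simpa [hN] using h
  · exact pow_mul_lt_of_lt_NBS hN (by omega)

def interiorIndices (rB rS : ℝ) : Finset ℕ :=
  (Finset.Icc 1 (NBS rB rS)).filter fun k => 6 ^ k * rB ≤ rS

lemma sum_Icc_NBS_le_sum_interiorIndices_add (g : ℕ → ℝ) (hg : ∀ k, 0 ≤ g k) :
    ∑ k ∈ Finset.Icc 1 (NBS rB rS), g k ≤
      ∑ k ∈ interiorIndices rB rS, g k + g (NBS rB rS) := by
  rw [interiorIndices, ← Finset.sum_filter_add_sum_filter_not _ (fun k => 6 ^ k * rB ≤ rS)]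
  gcongr
  have hsub : (Finset.Icc 1 (NBS rB rS)).filter (fun k => ¬ 6 ^ k * rB ≤ rS) ⊆
      {NBS rB rS} := by
    intro k hk
    simp only [Finset.mem_filter, Finset.mem_Icc] at hk
    obtain ⟨⟨hk1, hkN⟩, hfar⟩ := hk
    rcases hkN.lt_or_eq with hlt | heq
    · exact absurd (pow_mul_lt_of_lt_NBS hk1 hlt).le hfar
    · exact Finset.mem_singleton.mpr heq
  calc _ ≤ ∑ k ∈ {NBS rB rS}, g k :=
        Finset.sum_le_sum_of_subset_of_nonneg hsub fun k _ _ => hg k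
    _ = g (NBS rB rS) := Finset.sum_singleton _ _

end NBS

/-- Each radius `ρ p` is charged to the first radius `6^j r₀` reaching it; `6`-separation
makes this charging injective. -/
lemma sum_le_mul_sum_Icc_NBS {ι : Type*} (T : Finset ι) (ρ : ι → ℝ) (f : ℝ → ℝ)
    {r₀ rS C : ℝ} (hr₀ : 0 < r₀) (hC : 0 ≤ C)
    (hρ : ∀ p ∈ T, r₀ < ρ p ∧ ρ p ≤ rS)
    (hsep : ∀ p ∈ T, ∀ q ∈ T, p ≠ q → 6 * ρ p ≤ ρ q ∨ 6 * ρ q ≤ ρ p)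
    (hf₀ : ∀ s, 0 < s → 0 ≤ f s)
    (hf : ∀ s s', 0 < s → s ≤ s' → s' ≤ 6 * s → f s ≤ C * f s') :
    ∑ p ∈ T, f (ρ p) ≤ C * ∑ j ∈ Finset.Icc 1 (NBS r₀ rS), f (6 ^ j * r₀) := by
  set g : ι → ℕ := fun p => NBS r₀ (ρ p)
  have hbracket : ∀ p ∈ T, ρ p ≤ 6 ^ g p * r₀ ∧ 6 ^ g p * r₀ < 6 * ρ p := by
    intro p hp
    refine ⟨(NBS_spec hr₀).2, ?_⟩
    calc 6 ^ g p * r₀ = 6 * (6 ^ (g p - 1) * r₀) := by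
          rw [← mul_assoc, ← pow_succ', Nat.sub_add_cancel (NBS_spec hr₀).1]
      _ < 6 * ρ p := by linarith [pow_pred_NBS_mul_lt (hρ p hp).1]
  have hinj : Set.InjOn g T := by
    intro p hp q hq hpq
    by_contra hne
    have hp' := hbracket p hp
    have hq' := hbracket q hq
    have hpq' : (6 : ℝ) ^ g p * r₀ = 6 ^ g q * r₀ := by rw [hpq]
    rcases hsep p hp q hq hne with h | h <;> linarith
  have hmaps : ∀ p ∈ T, g p ∈ Finset.Icc 1 (NBS r₀ rS) := fun p hp =>
    Finset.mem_Icc.mpr ⟨(NBS_spec hr₀).1, NBS_le_NBS hr₀ (hρ p hp).2⟩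
  calc ∑ p ∈ T, f (ρ p) ≤ ∑ p ∈ T, C * f (6 ^ g p * r₀) :=
        Finset.sum_le_sum fun p hp =>
          hf _ _ (hr₀.trans (hρ p hp).1) (hbracket p hp).1 (hbracket p hp).2.le
    _ = C * ∑ j ∈ T.image g, f (6 ^ j * r₀) := by
        rw [← Finset.mul_sum, Finset.sum_image hinj]
    _ ≤ C * ∑ j ∈ Finset.Icc 1 (NBS r₀ rS), f (6 ^ j * r₀) :=
        mul_le_mul_of_nonneg_left (Finset.sum_le_sum_of_subset_of_nonneg
          (Finset.image_subset_iff.mpr hmaps) fun j _ _ => hf₀ _ (by positivity)) hC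

section

variable {X : Type*} [MetricSpace X] [MeasurableSpace X] {μ : Measure X} {Λ : X → ℝ → ℝ}
  {Cl α : ℝ} {x : X}

namespace UpperDoubling

lemma le_pow_mul_two_pow_mul (h : UpperDoubling μ Λ Cl) (x : X) {ρ : ℝ} (hρ : 0 < ρ)
    (n : ℕ) : Λ x (2 ^ n * ρ) ≤ Cl ^ n * Λ x ρ := by
  induction n with
  | zero => simp
  | succ n ih =>
    calc Λ x (2 ^ (n + 1) * ρ) ≤ Cl * Λ x (2 ^ (n + 1) * ρ / 2) :=
          h.le_mul_half x _ (by positivity)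
      _ = Cl * Λ x (2 ^ n * ρ) := by rw [pow_succ]; ring_nf
      _ ≤ Cl * (Cl ^ n * Λ x ρ) := by gcongr; linarith [h.one_le]
      _ = Cl ^ (n + 1) * Λ x ρ := by ring

lemma le_pow_three_mul (h : UpperDoubling μ Λ Cl) (x : X) {ρ ρ' : ℝ} (hρ : 0 < ρ)
    (hρ' : 0 < ρ') (hρρ' : ρ' ≤ 8 * ρ) : Λ x ρ' ≤ Cl ^ 3 * Λ x ρ :=
  calc Λ x ρ' ≤ Λ x (2 ^ 3 * ρ) :=
        h.mono x (mem_Ioi.mpr hρ') (mem_Ioi.mpr (by positivity)) (by norm_num; linarith)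
    _ ≤ Cl ^ 3 * Λ x ρ := h.le_pow_mul_two_pow_mul x hρ 3

lemma measure_ball_ne_top (h : UpperDoubling μ Λ Cl) (x : X) {ρ : ℝ} (hρ : 0 < ρ) :
    μ (ball x ρ) ≠ ⊤ :=
  ne_top_of_le_ne_top ofReal_ne_top (h.measure_ball_le x ρ hρ)

lemma toReal_measure_ball_le (h : UpperDoubling μ Λ Cl) (x : X) {ρ : ℝ} (hρ : 0 < ρ) :
    (μ (ball x ρ)).toReal ≤ Λ x ρ :=
  ENNReal.toReal_le_of_le_ofReal (h.pos x ρ hρ).le (h.measure_ball_le x ρ hρ)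

end UpperDoubling

def ktildeTerm (μ : Measure X) (Λ : X → ℝ → ℝ) (α : ℝ) (x : X) (ρ : ℝ) : ℝ :=
  ((μ (ball x ρ)).toReal / Λ x ρ) ^ (1 - α)

lemma Ktilde_eq (rB rS : ℝ) : Ktilde μ Λ α x rB rS =
    1 + ∑ k ∈ Finset.Icc 1 (NBS rB rS), ktildeTerm μ Λ α x (6 ^ k * rB) :=
  rfl

lemma ktildeTerm_nonneg (h : UpperDoubling μ Λ Cl) {ρ : ℝ} (hρ : 0 < ρ) :
    0 ≤ ktildeTerm μ Λ α x ρ :=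
  Real.rpow_nonneg (div_nonneg toReal_nonneg (h.pos x ρ hρ).le) _

lemma ktildeTerm_le_one (h : UpperDoubling μ Λ Cl) (hα : α ≤ 1) {ρ : ℝ} (hρ : 0 < ρ) :
    ktildeTerm μ Λ α x ρ ≤ 1 :=
  Real.rpow_le_one (div_nonneg toReal_nonneg (h.pos x ρ hρ).le)
    (div_le_one_of_le₀ (h.toReal_measure_ball_le x hρ) (h.pos x ρ hρ).le) (by linarith)

lemma ktildeTerm_le_mul (h : UpperDoubling μ Λ Cl) (hα : α ≤ 1) {ρ ρ' : ℝ} (hρ : 0 < ρ)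
    (hρρ' : ρ ≤ ρ') (hρ' : ρ' ≤ 6 * ρ) :
    ktildeTerm μ Λ α x ρ ≤ (Cl ^ 3) ^ (1 - α) * ktildeTerm μ Λ α x ρ' := by
  have hρ'pos : 0 < ρ' := hρ.trans_le hρρ'
  have hbase : (μ (ball x ρ)).toReal / Λ x ρ ≤
      Cl ^ 3 * ((μ (ball x ρ')).toReal / Λ x ρ') := by
    rw [mul_div_assoc', div_le_div_iff₀ (h.pos x ρ hρ) (h.pos x ρ' hρ'pos)]
    calc (μ (ball x ρ)).toReal * Λ x ρ' ≤ (μ (ball x ρ')).toReal * (Cl ^ 3 * Λ x ρ) :=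
          mul_le_mul (toReal_mono (h.measure_ball_ne_top x hρ'pos)
              (measure_mono (ball_subset_ball hρρ')))
            (h.le_pow_three_mul x hρ hρ'pos (by linarith)) (h.pos x ρ' hρ'pos).le
            toReal_nonneg
      _ = Cl ^ 3 * (μ (ball x ρ')).toReal * Λ x ρ := by ring
  rw [ktildeTerm, ktildeTerm, ← Real.mul_rpow (pow_nonneg (zero_le_one.trans h.one_le) 3)
    (div_nonneg toReal_nonneg (h.pos x ρ' hρ'pos).le)]
  exact Real.rpow_le_rpow (div_nonneg toReal_nonneg (h.pos x ρ hρ).le) hbase (by linarith)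

/-- All terms are at most `1` and only the last may be non-interior, so
`K̃ ≤ 2 + (interior sum)`; the threshold `3` then leaves a factor `3`. -/
lemma Ktilde_le_three_mul_sum_interiorIndices (h : UpperDoubling μ Λ Cl) (hα : α ≤ 1)
    {rB rS : ℝ} (hB : 0 < rB) (hK : 3 < Ktilde μ Λ α x rB rS) :
    Ktilde μ Λ α x rB rS ≤
      3 * ∑ k ∈ interiorIndices rB rS, ktildeTerm μ Λ α x (6 ^ k * rB) := by
  have hsplit := sum_Icc_NBS_le_sum_interiorIndices_add (rB := rB) (rS := rS)
    (fun k => ktildeTerm μ Λ α x (6 ^ k * rB)) fun k => ktildeTerm_nonneg h (by positivity)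
  have hlast : ktildeTerm μ Λ α x (6 ^ NBS rB rS * rB) ≤ 1 :=
    ktildeTerm_le_one h hα (by positivity)
  rw [Ktilde_eq] at hK ⊢
  linarith

def chainIndices (r : ℕ → ℝ) (m : ℕ) : Finset (Σ _ : ℕ, ℕ) :=
  (Finset.range (m - 1)).sigma fun i => interiorIndices (r i) (r (i + 1))

section chainIndices

variable {r : ℕ → ℝ} {m : ℕ}

lemma of_mem_chainIndices {p : Σ _ : ℕ, ℕ} (hp : p ∈ chainIndices r m) :
    p.1 + 1 < m ∧ 1 ≤ p.2 ∧ 6 ^ p.2 * r p.1 ≤ r (p.1 + 1) := by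
  simp only [chainIndices, interiorIndices, Finset.mem_sigma, Finset.mem_range,
    Finset.mem_filter, Finset.mem_Icc] at hp
  exact ⟨by omega, hp.2.1.1, hp.2.2⟩

lemma chainIndices_radius_mem (hr : ∀ i < m, 0 < r i) (hmono : MonotoneOn r (Iio m))
    (hm : 1 ≤ m) {p : Σ _ : ℕ, ℕ} (hp : p ∈ chainIndices r m) :
    r 0 < 6 ^ p.2 * r p.1 ∧ 6 ^ p.2 * r p.1 ≤ r (m - 1) := by
  obtain ⟨hpm, hp1, hpρ⟩ := of_mem_chainIndices hp
  have hr0 : r 0 ≤ r p.1 := hmono (mem_Iio.mpr hm) (mem_Iio.mpr (by omega)) (Nat.zero_le _)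
  refine ⟨?_, hpρ.trans (hmono (mem_Iio.mpr hpm) (mem_Iio.mpr (by omega)) (by omega))⟩
  calc r 0 < 6 ^ 1 * r p.1 := by linarith [hr 0 hm]
    _ ≤ 6 ^ p.2 * r p.1 := by gcongr; exacts [(hr _ (by omega)).le, by norm_num]

lemma six_mul_radius_le_of_lex (hr : ∀ i < m, 0 < r i) (hmono : MonotoneOn r (Iio m))
    {i j k l : ℕ} (hp : ⟨i, k⟩ ∈ chainIndices r m)
    (hq : ⟨j, l⟩ ∈ chainIndices r m) (hlt : i < j ∨ i = j ∧ k < l) :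
    6 * (6 ^ k * r i) ≤ 6 ^ l * r j := by
  obtain ⟨hi, -, hk⟩ := of_mem_chainIndices hp
  obtain ⟨hj, hl, -⟩ := of_mem_chainIndices hq
  dsimp only at hi hk hj hl
  rcases hlt with hij | ⟨rfl, hkl⟩
  · calc 6 * (6 ^ k * r i) ≤ 6 ^ 1 * r j := by
          rw [pow_one]
          gcongr
          exact hk.trans (hmono (mem_Iio.mpr hi) (mem_Iio.mpr (by omega)) hij)
      _ ≤ 6 ^ l * r j := by gcongr; exacts [(hr j (by omega)).le, by norm_num]
  · rw [← mul_assoc, ← pow_succ']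
    gcongr
    exacts [(hr _ (by omega)).le, by norm_num, hkl]

lemma chainIndices_separated (hr : ∀ i < m, 0 < r i) (hmono : MonotoneOn r (Iio m))
    {p q : Σ _ : ℕ, ℕ} (hp : p ∈ chainIndices r m) (hq : q ∈ chainIndices r m) (hne : p ≠ q) :
    6 * (6 ^ p.2 * r p.1) ≤ 6 ^ q.2 * r q.1 ∨ 6 * (6 ^ q.2 * r q.1) ≤ 6 ^ p.2 * r p.1 := by
  obtain ⟨i, k⟩ := p
  obtain ⟨j, l⟩ := q
  rcases lt_trichotomy i j with hij | rfl | hij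
  · exact .inl (six_mul_radius_le_of_lex hr hmono hp hq (.inl hij))
  · rcases lt_trichotomy k l with hkl | rfl | hkl
    · exact .inl (six_mul_radius_le_of_lex hr hmono hp hq (.inr ⟨rfl, hkl⟩))
    · exact absurd rfl hne
    · exact .inr (six_mul_radius_le_of_lex hr hmono hq hp (.inr ⟨rfl, hkl⟩))
  · exact .inr (six_mul_radius_le_of_lex hr hmono hq hp (.inl hij))

end chainIndices

/-- The radii `6^k r_i ≤ r_{i+1}` (`k ≥ 1`) of all the blocks of the chain are `6`-separated
and lie in `(r₀, r_{m-1}]`, so together they are controlled by `K̃_{B₀,B_{m-1}}`. -/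
lemma sum_Ktilde_le_of_chain (h : UpperDoubling μ Λ Cl) (hα : α ≤ 1) {m : ℕ} (hm : 1 ≤ m)
    {r : ℕ → ℝ} (hr : ∀ i < m, 0 < r i) (hmono : MonotoneOn r (Iio m))
    (hK : ∀ i, i + 1 < m → 3 < Ktilde μ Λ α x (r i) (r (i + 1))) :
    ∑ i ∈ Finset.range (m - 1), Ktilde μ Λ α x (r i) (r (i + 1)) ≤
      3 * (Cl ^ 3) ^ (1 - α) * Ktilde μ Λ α x (r 0) (r (m - 1)) := by
  have hC : 0 ≤ (Cl ^ 3) ^ (1 - α) :=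
    Real.rpow_nonneg (pow_nonneg (zero_le_one.trans h.one_le) 3) _
  calc ∑ i ∈ Finset.range (m - 1), Ktilde μ Λ α x (r i) (r (i + 1))
      ≤ ∑ i ∈ Finset.range (m - 1), 3 * ∑ k ∈ interiorIndices (r i) (r (i + 1)),
          ktildeTerm μ Λ α x (6 ^ k * r i) :=
        Finset.sum_le_sum fun i hi => by
          have := Finset.mem_range.mp hi
          exact Ktilde_le_three_mul_sum_interiorIndices h hα (hr i (by omega)) (hK i (by omega))
    _ = 3 * ∑ p ∈ chainIndices r m, ktildeTerm μ Λ α x (6 ^ p.2 * r p.1) := by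
        rw [← Finset.mul_sum, chainIndices, Finset.sum_sigma]
    _ ≤ 3 * ((Cl ^ 3) ^ (1 - α) *
          ∑ j ∈ Finset.Icc 1 (NBS (r 0) (r (m - 1))), ktildeTerm μ Λ α x (6 ^ j * r 0)) := by
        gcongr
        exact sum_le_mul_sum_Icc_NBS (chainIndices r m) (fun p => 6 ^ p.2 * r p.1)
          (ktildeTerm μ Λ α x) (hr 0 hm) hC
          (fun _ hp => chainIndices_radius_mem hr hmono hm hp)
          (fun _ hp _ hq hne => chainIndices_separated hr hmono hp hq hne)
          (fun _ hs => ktildeTerm_nonneg h hs)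
          fun _ _ hs hss' hs' => ktildeTerm_le_mul h hα hs hss' hs'
    _ ≤ 3 * (Cl ^ 3) ^ (1 - α) * Ktilde μ Λ α x (r 0) (r (m - 1)) := by
        rw [Ktilde_eq, mul_assoc]
        gcongr
        linarith

end

end NonHomog

theorem statement8_general {X : Type*} [MetricSpace X] [MeasurableSpace X]
    (μ : MeasureTheory.Measure X) (Λ : X → ℝ → ℝ) (Cl : ℝ)
    (hUD : NonHomog.UpperDoubling μ Λ Cl)
    (α : ℝ) (hα : α ∈ Set.Ico (0 : ℝ) 1) :
    ∃ P : ℝ, 0 < P ∧ ∃ C : ℝ, 0 < C ∧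
      ∀ (m : ℕ) (x : X) (r : ℕ → ℝ), 1 ≤ m →
        (∀ i, i < m → 0 < r i) →
        (∀ i, i + 1 < m → r i ≤ r (i + 1)) →
        (∀ i, i + 1 < m → P < NonHomog.Ktilde μ Λ α x (r i) (r (i + 1))) →
        ∑ i ∈ Finset.range (m - 1), NonHomog.Ktilde μ Λ α x (r i) (r (i + 1)) ≤
          C * NonHomog.Ktilde μ Λ α x (r 0) (r (m - 1)) := by
  have hCl : 0 < Cl ^ 3 := pow_pos (zero_lt_one.trans_le hUD.one_le) 3
  refine ⟨3, three_pos, 3 * (Cl ^ 3) ^ (1 - α), by positivity, ?_⟩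
  intro m x r hm hr hsucc hK
  exact NonHomog.sum_Ktilde_le_of_chain hUD hα.2.le hm hr
    (monotoneOn_of_le_add_one ordConnected_Iio fun i _ _ hi => hsucc i hi) hK

/-- Lemma 3.7: if each `K̃^{(α)}_{B_i,B_{i+1}}` exceeds a suitable threshold `P_α` for a
chain of concentric balls, then the sum is controlled by `K̃^{(α)}_{B₁,B_m}`. -/
theorem statement8 {X : Type*} [MetricSpace X] [MeasurableSpace X] [BorelSpace X]
    (μ : MeasureTheory.Measure X) (Λ : X → ℝ → ℝ) (Cl : ℝ)
    (hGD : NonHomog.GeomDoubling X) (hUD : NonHomog.UpperDoubling μ Λ Cl)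
    (α : ℝ) (hα : α ∈ Set.Ico (0 : ℝ) 1) :
    ∃ P : ℝ, 0 < P ∧ ∃ C : ℝ, 0 < C ∧
      ∀ (m : ℕ) (x : X) (r : ℕ → ℝ), 1 ≤ m →
        (∀ i, i < m → 0 < r i) →
        (∀ i, i + 1 < m → r i ≤ r (i + 1)) →
        (∀ i, i + 1 < m → P < NonHomog.Ktilde μ Λ α x (r i) (r (i + 1))) →
        ∑ i ∈ Finset.range (m - 1), NonHomog.Ktilde μ Λ α x (r i) (r (i + 1)) ≤
          C * NonHomog.Ktilde μ Λ α x (r 0) (r (m - 1)) :=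
  statement8_general μ Λ Cl hUD α hα
end
end

section
/- Let (X,d,μ) be a non-homogeneous metric measure space, α ∈ (0,1), and suppose the dominating function λ satisfies the α-weak reverse doubling condition. Then there exists a constant C > 0 such that for all x ∈ X and all r ∈ (0, 2 diam(X)), ∫_{B(x,r)} [λ(y, d(x,y))]^{α−1} dμ(y) ≤ C [λ(x,r)]^α. -/
open MeasureTheory Metric Set Filter ENNReal NNReal

noncomputable section

/-!
Split `B(x, r) \ {x}` into the annuli `r / 2 ^ (k + 1) ≤ d(x, y) < r / 2 ^ k`. On the `k`-th
annulus upper doubling bounds the integrand by `Cl ^ (1 - α) Λ(x, r / 2 ^ (k + 1)) ^ (α - 1)` and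
the measure by `Cl Λ(x, r / 2 ^ (k + 1))`, so the annulus contributes at most
`Cl ^ (2 - α) Λ(x, r / 2 ^ (k + 1)) ^ α ≤ Cl ^ (2 - α) C(2 ^ (k + 1)) ^ (-α) Λ(x, r) ^ α` by
reverse doubling, and these bounds are summable by the weak reverse doubling condition. The centre
is `μ`-null: `μ {x} ≤ Λ(x, r / 2 ^ (k + 1)) ≤ Λ(x, r) / C(2 ^ (k + 1))`, and `C(2 ^ (k + 1)) → ∞`
because its negative powers are summable.
-/

open scoped Topology

theorem tendsto_atTop_of_summable_rpow_neg {c : ℕ → ℝ} {α : ℝ} (hc : ∀ k, 0 < c k)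
    (hα : 0 < α) (hsum : Summable fun k => c k ^ (-α)) : Tendsto c atTop atTop := by
  have hto : Tendsto (fun k => c k ^ (-α)) atTop (𝓝[>] 0) :=
    tendsto_nhdsWithin_iff.2 ⟨hsum.tendsto_atTop_zero,
      Eventually.of_forall fun k => Real.rpow_pos_of_pos (hc k) _⟩
  refine ((tendsto_rpow_neg_nhdsGT_zero (neg_lt_zero.2 (inv_pos.2 hα))).comp hto).congr
    fun k => ?_
  rw [Function.comp_apply, ← Real.rpow_mul (hc k).le, neg_mul_neg, mul_inv_cancel₀ hα.ne',
    Real.rpow_one]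

theorem exists_div_two_pow_le_lt {d r : ℝ} (hd : 0 < d) (hdr : d < r) :
    ∃ k : ℕ, r / 2 ^ (k + 1) ≤ d ∧ d < 2 * (r / 2 ^ (k + 1)) := by
  have hex : ∃ k : ℕ, r / 2 ^ (k + 1) ≤ d := by
    obtain ⟨n, hn⟩ := pow_unbounded_of_one_lt (r / d) one_lt_two
    refine ⟨n, ?_⟩
    rw [div_lt_iff₀ hd] at hn
    rw [div_le_iff₀ (by positivity)]
    have h2 : (2 : ℝ) ^ n ≤ 2 ^ (n + 1) := pow_le_pow_right₀ one_le_two (n.le_add_right 1)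
    nlinarith
  refine ⟨Nat.find hex, Nat.find_spec hex, ?_⟩
  have hmin : ∀ j, j + 1 = Nat.find hex → d < r / 2 ^ (j + 1) := fun j hj =>
    not_le.1 (Nat.find_min hex (by omega))
  rw [pow_succ, ← div_div, mul_div_cancel₀ _ two_ne_zero]
  rcases h : Nat.find hex with _ | j
  · simpa using hdr
  · exact hmin j h.symm

theorem ball_diff_singleton_subset_iUnion_annulus {X : Type*} [MetricSpace X] (x : X) (r : ℝ) :
    ball x r \ {x} ⊆ ⋃ k : ℕ, ball x (2 * (r / 2 ^ (k + 1))) \ ball x (r / 2 ^ (k + 1)) := by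
  rintro y ⟨hyr, hyx⟩
  obtain ⟨k, hk⟩ := exists_div_two_pow_le_lt (dist_pos.2 hyx) (mem_ball.1 hyr)
  exact mem_iUnion.2 ⟨k, mem_ball.2 hk.2, fun h => (mem_ball.1 h).not_ge hk.1⟩

theorem integral_le_of_lintegral_norm_le {Y : Type*} [MeasurableSpace Y] {μ : Measure Y}
    {f : Y → ℝ} {c : ℝ} (hc : 0 ≤ c) (h : ∫⁻ a, ENNReal.ofReal ‖f a‖ ∂μ ≤ ENNReal.ofReal c) :
    ∫ a, f a ∂μ ≤ c :=
  calc ∫ a, f a ∂μ ≤ (∫⁻ a, ENNReal.ofReal ‖f a‖ ∂μ).toReal :=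
        (le_abs_self _).trans (norm_integral_le_lintegral_norm f)
    _ ≤ c := ENNReal.toReal_le_of_le_ofReal hc h

namespace NonHomog

/-- The second clause of `WeakReverseDoubling`, for a fixed choice of the constants `C(a)`. -/
def ReverseDoublingWith (X : Type*) [MetricSpace X] (Λ : X → ℝ → ℝ) (C : ℝ → ℝ) : Prop :=
  ∀ r : ℝ, 0 < r → ENNReal.ofReal r < 2 * ediam (univ : Set X) →
    ∀ a : ℝ, 1 < a →
      ENNReal.ofReal a < 2 * ediam (univ : Set X) / ENNReal.ofReal r →
      ∀ x : X, C a * Λ x r ≤ Λ x (a * r)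

section

variable {X : Type*} [MetricSpace X] {Λ : X → ℝ → ℝ} {C : ℝ → ℝ} {r a : ℝ}

theorem ReverseDoublingWith.le_div (hRD : ReverseDoublingWith X Λ C) (hCa : 0 < C a)
    (hr : 0 < r) (hrd : ENNReal.ofReal r < 2 * ediam (univ : Set X)) (ha : 1 < a)
    (x : X) : Λ x (r / a) ≤ Λ x r / C a := by
  have ha₀ : 0 < a := one_pos.trans ha
  have hra : a * (r / a) = r := mul_div_cancel₀ r ha₀.ne'
  have hrd' : ENNReal.ofReal (r / a) < 2 * ediam (univ : Set X) :=
    (ENNReal.ofReal_le_ofReal (div_le_self hr.le ha.le)).trans_lt hrd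
  have had : ENNReal.ofReal a < 2 * ediam (univ : Set X) / ENNReal.ofReal (r / a) := by
    rwa [ENNReal.lt_div_iff_mul_lt (Or.inr ENNReal.ofReal_ne_top) (Or.inl ENNReal.ofReal_ne_top),
      ← ENNReal.ofReal_mul ha₀.le, hra]
  rw [le_div_iff₀' hCa]
  simpa only [hra] using hRD (r / a) (div_pos hr ha₀) hrd' a ha had x

theorem ReverseDoublingWith.rpow_div_le (hRD : ReverseDoublingWith X Λ C)
    (hpos : ∀ x r, 0 < r → 0 < Λ x r) (hCa : 0 < C a) {α : ℝ} (hα : 0 ≤ α)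
    (hr : 0 < r) (hrd : ENNReal.ofReal r < 2 * ediam (univ : Set X)) (ha : 1 < a)
    (x : X) : Λ x (r / a) ^ α ≤ Λ x r ^ α * C a ^ (-α) := by
  calc Λ x (r / a) ^ α ≤ (Λ x r / C a) ^ α :=
        Real.rpow_le_rpow (hpos x _ (div_pos hr (one_pos.trans ha))).le
          (hRD.le_div hCa hr hrd ha x) hα
    _ = Λ x r ^ α * C a ^ (-α) := by
        rw [Real.div_rpow (hpos x r hr).le hCa.le, Real.rpow_neg hCa.le, div_eq_mul_inv]

end

namespace UpperDoubling

variable {X : Type*} [MetricSpace X] [MeasurableSpace X] {μ : Measure X} {Λ : X → ℝ → ℝ}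
  {Cl α : ℝ}

theorem cl_pos (hUD : UpperDoubling μ Λ Cl) : 0 < Cl :=
  one_pos.trans_le hUD.one_le

theorem rpow_dist_le (hUD : UpperDoubling μ Λ Cl) (hα : α ≤ 1) {x y : X} {s : ℝ}
    (hs : 0 < s) (hsd : s ≤ dist x y) :
    Λ y (dist x y) ^ (α - 1) ≤ Cl ^ (1 - α) * Λ x s ^ (α - 1) := by
  have hd : 0 < dist x y := hs.trans_le hsd
  have hΛs := hUD.pos x s hs
  have hle : Λ x s / Cl ≤ Λ y (dist x y) := by
    rw [div_le_iff₀ hUD.cl_pos, mul_comm]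
    exact (hUD.mono x hs hd hsd).trans (hUD.compat x y _ hd le_rfl)
  calc Λ y (dist x y) ^ (α - 1) ≤ (Λ x s / Cl) ^ (α - 1) :=
        Real.rpow_le_rpow_of_nonpos (div_pos hΛs hUD.cl_pos) hle (by linarith)
    _ = Cl ^ (1 - α) * Λ x s ^ (α - 1) := by
        rw [Real.div_rpow hΛs.le hUD.cl_pos.le, div_eq_mul_inv, ← Real.rpow_neg hUD.cl_pos.le,
          neg_sub, mul_comm]

theorem lintegral_annulus_le [OpensMeasurableSpace X] (hUD : UpperDoubling μ Λ Cl)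
    (hα : α ≤ 1) (x : X) {s : ℝ} (hs : 0 < s) :
    ∫⁻ y in ball x (2 * s) \ ball x s, ENNReal.ofReal ‖Λ y (dist x y) ^ (α - 1)‖ ∂μ ≤
      ENNReal.ofReal (Cl ^ (2 - α) * Λ x s ^ α) := by
  have hΛs := hUD.pos x s hs
  have hpoint : ∀ y ∈ ball x (2 * s) \ ball x s,
      ENNReal.ofReal ‖Λ y (dist x y) ^ (α - 1)‖ ≤
        ENNReal.ofReal (Cl ^ (1 - α) * Λ x s ^ (α - 1)) := by
    rintro y ⟨-, hy⟩
    have hsd : s ≤ dist x y := by rw [dist_comm]; exact not_lt.1 hy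
    have hΛy := hUD.pos y _ (hs.trans_le hsd)
    rw [Real.norm_of_nonneg (Real.rpow_nonneg hΛy.le _)]
    exact ENNReal.ofReal_le_ofReal (hUD.rpow_dist_le hα hs hsd)
  have hmeasure : μ (ball x (2 * s) \ ball x s) ≤ ENNReal.ofReal (Cl * Λ x s) :=
    calc μ (ball x (2 * s) \ ball x s) ≤ μ (ball x (2 * s)) := measure_mono sdiff_subset
      _ ≤ ENNReal.ofReal (Λ x (2 * s)) := hUD.measure_ball_le x _ (by positivity)
      _ ≤ ENNReal.ofReal (Cl * Λ x s) := by
        simpa only [mul_div_cancel_left₀ s two_ne_zero] using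
          ENNReal.ofReal_le_ofReal (hUD.le_mul_half x (2 * s) (by positivity))
  calc ∫⁻ y in ball x (2 * s) \ ball x s, ENNReal.ofReal ‖Λ y (dist x y) ^ (α - 1)‖ ∂μ
      ≤ ∫⁻ _ in ball x (2 * s) \ ball x s, ENNReal.ofReal (Cl ^ (1 - α) * Λ x s ^ (α - 1)) ∂μ :=
        setLIntegral_mono' (measurableSet_ball.diff measurableSet_ball) hpoint
    _ ≤ ENNReal.ofReal (Cl ^ (1 - α) * Λ x s ^ (α - 1)) * ENNReal.ofReal (Cl * Λ x s) := by
        rw [setLIntegral_const]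
        gcongr
    _ = ENNReal.ofReal (Cl ^ (2 - α) * Λ x s ^ α) := by
        have hCl := hUD.cl_pos
        rw [← ENNReal.ofReal_mul (by positivity)]
        congr 1
        calc Cl ^ (1 - α) * Λ x s ^ (α - 1) * (Cl * Λ x s)
            = Cl ^ (1 - α + 1) * Λ x s ^ (α - 1 + 1) := by
              rw [Real.rpow_add_one hCl.ne', Real.rpow_add_one hΛs.ne']
              ring
          _ = Cl ^ (2 - α) * Λ x s ^ α := by ring_nf

end UpperDoubling

section

variable {X : Type*} [MetricSpace X] [MeasurableSpace X] {μ : Measure X} {Λ : X → ℝ → ℝ}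
  {Cl : ℝ} {C : ℝ → ℝ} {r : ℝ}

theorem measure_singleton_eq_zero (hUD : UpperDoubling μ Λ Cl)
    (hRD : ReverseDoublingWith X Λ C) (hC : ∀ a, 0 < C a)
    (hC_tendsto : Tendsto (fun k : ℕ => C (2 ^ (k + 1))) atTop atTop)
    (hr : 0 < r) (hrd : ENNReal.ofReal r < 2 * ediam (univ : Set X)) (x : X) :
    μ {x} = 0 := by
  have hbound : ∀ k : ℕ, μ {x} ≤ ENNReal.ofReal (Λ x r / C (2 ^ (k + 1))) := fun k =>
    calc μ {x} ≤ μ (ball x (r / 2 ^ (k + 1))) :=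
          measure_mono (singleton_subset_iff.2 (mem_ball_self (by positivity)))
      _ ≤ ENNReal.ofReal (Λ x (r / 2 ^ (k + 1))) := hUD.measure_ball_le x _ (by positivity)
      _ ≤ ENNReal.ofReal (Λ x r / C (2 ^ (k + 1))) :=
          ENNReal.ofReal_le_ofReal (hRD.le_div (hC _) hr hrd
            (one_lt_pow₀ (one_lt_two : (1 : ℝ) < 2) k.succ_ne_zero) x)
  have hto : Tendsto (fun k : ℕ => ENNReal.ofReal (Λ x r / C (2 ^ (k + 1)))) atTop (𝓝 0) := by
    simpa using ENNReal.tendsto_ofReal (tendsto_const_nhds.div_atTop hC_tendsto)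
  exact le_antisymm (ge_of_tendsto' hto hbound) zero_le

theorem lintegral_ball_rpow_le [OpensMeasurableSpace X] (hUD : UpperDoubling μ Λ Cl)
    {α : ℝ} (hα : α ∈ Ioo (0 : ℝ) 1) (hRD : ReverseDoublingWith X Λ C) (hC : ∀ a, 0 < C a)
    (hsum : Summable fun k : ℕ => C (2 ^ (k + 1)) ^ (-α))
    (hr : 0 < r) (hrd : ENNReal.ofReal r < 2 * ediam (univ : Set X)) (x : X) :
    ∫⁻ y in ball x r, ENNReal.ofReal ‖Λ y (dist x y) ^ (α - 1)‖ ∂μ ≤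
      ENNReal.ofReal (Cl ^ (2 - α) * (∑' k : ℕ, C (2 ^ (k + 1)) ^ (-α)) * Λ x r ^ α) := by
  set f : X → ℝ≥0∞ := fun y => ENNReal.ofReal ‖Λ y (dist x y) ^ (α - 1)‖
  set u : ℕ → ℝ := fun k => Cl ^ (2 - α) * Λ x r ^ α * C (2 ^ (k + 1)) ^ (-α)
  have hnull : μ {x} = 0 := measure_singleton_eq_zero hUD hRD hC
    (tendsto_atTop_of_summable_rpow_neg (fun _ => hC _) hα.1 hsum) hr hrd x
  have hannulus : ∀ k : ℕ,
      ∫⁻ y in ball x (2 * (r / 2 ^ (k + 1))) \ ball x (r / 2 ^ (k + 1)), f y ∂μ ≤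
        ENNReal.ofReal (u k) := fun k => by
    refine (hUD.lintegral_annulus_le hα.2.le x (by positivity)).trans
      (ENNReal.ofReal_le_ofReal ?_)
    simp only [u, mul_assoc]
    gcongr
    · exact (Real.rpow_pos_of_pos hUD.cl_pos _).le
    · exact hRD.rpow_div_le hUD.pos (hC _) hα.1.le hr hrd
        (one_lt_pow₀ (one_lt_two : (1 : ℝ) < 2) k.succ_ne_zero) x
  have hu : ∀ k, 0 ≤ u k := fun k =>
    mul_nonneg
      (mul_nonneg (Real.rpow_nonneg hUD.cl_pos.le _) (Real.rpow_nonneg (hUD.pos x r hr).le _))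
      (Real.rpow_nonneg (hC _).le _)
  calc ∫⁻ y in ball x r, f y ∂μ = ∫⁻ y in ball x r \ {x}, f y ∂μ :=
        (setLIntegral_congr (sdiff_null_ae_eq_self hnull)).symm
    _ ≤ ∫⁻ y in ⋃ k : ℕ, ball x (2 * (r / 2 ^ (k + 1))) \ ball x (r / 2 ^ (k + 1)), f y ∂μ :=
        lintegral_mono_set (ball_diff_singleton_subset_iUnion_annulus x r)
    _ ≤ ∑' k : ℕ, ∫⁻ y in ball x (2 * (r / 2 ^ (k + 1))) \ ball x (r / 2 ^ (k + 1)), f y ∂μ :=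
        lintegral_iUnion_le _ _
    _ ≤ ∑' k, ENNReal.ofReal (u k) := ENNReal.tsum_le_tsum hannulus
    _ = ENNReal.ofReal (Cl ^ (2 - α) * (∑' k : ℕ, C (2 ^ (k + 1)) ^ (-α)) * Λ x r ^ α) := by
        rw [← ENNReal.ofReal_tsum_of_nonneg hu (hsum.mul_left _), _root_.tsum_mul_left]
        ring_nf

end

end NonHomog

theorem statement14_general {X : Type*} [MetricSpace X] [MeasurableSpace X] [BorelSpace X]
    (μ : MeasureTheory.Measure X) (Λ : X → ℝ → ℝ) (Cl : ℝ)
    (hUD : NonHomog.UpperDoubling μ Λ Cl)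
    (α : ℝ) (hα : α ∈ Set.Ioo (0 : ℝ) 1)
    (hWRD : NonHomog.WeakReverseDoubling X Λ α) :
    ∃ C : ℝ, 0 < C ∧ ∀ (x : X) (r : ℝ), 0 < r →
      ENNReal.ofReal r < 2 * EMetric.diam (Set.univ : Set X) →
      ∫ y in Metric.ball x r, Λ y (dist x y) ^ (α - 1) ∂μ ≤ C * Λ x r ^ α := by
  obtain ⟨C, hC_one_le, hRD, hC_summable⟩ := hWRD
  have hC : ∀ a, 0 < C a := fun a => one_pos.trans_le (hC_one_le a)
  have hsum := hC_summable 2 one_lt_two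
  have hS : 0 < ∑' k : ℕ, C (2 ^ (k + 1)) ^ (-α) :=
    hsum.tsum_pos (fun k => (Real.rpow_pos_of_pos (hC _) _).le) 0 (Real.rpow_pos_of_pos (hC _) _)
  have hK : 0 < Cl ^ (2 - α) * ∑' k : ℕ, C (2 ^ (k + 1)) ^ (-α) :=
    mul_pos (Real.rpow_pos_of_pos hUD.cl_pos _) hS
  refine ⟨_, hK, fun x r hr hrd => ?_⟩
  exact integral_le_of_lintegral_norm_le
    (mul_nonneg hK.le (Real.rpow_nonneg (hUD.pos x r hr).le _))
    (NonHomog.lintegral_ball_rpow_le hUD hα hRD hC hsum hr hrd x)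

/-- Lemma 4.3: local integrability of the kernel `[λ(y, d(x,y))]^{α-1}` under the
`α`-weak reverse doubling condition. -/
theorem statement14 {X : Type*} [MetricSpace X] [MeasurableSpace X] [BorelSpace X]
    (μ : MeasureTheory.Measure X) (Λ : X → ℝ → ℝ) (Cl : ℝ)
    (hGD : NonHomog.GeomDoubling X) (hUD : NonHomog.UpperDoubling μ Λ Cl)
    (α : ℝ) (hα : α ∈ Set.Ioo (0 : ℝ) 1)
    (hWRD : NonHomog.WeakReverseDoubling X Λ α) :
    ∃ C : ℝ, 0 < C ∧ ∀ (x : X) (r : ℝ), 0 < r →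
      ENNReal.ofReal r < 2 * EMetric.diam (Set.univ : Set X) →
      ∫ y in Metric.ball x r, Λ y (dist x y) ^ (α - 1) ∂μ ≤ C * Λ x r ^ α :=
  statement14_general μ Λ Cl hUD α hα hWRD
end
end
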